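/- Let x ⊆ ⟦n⟧_{j+1}, x̂ ⊆ ⟦n⟧_{j+2}, and suppose x⊙ ∪ x̂⊕ (as a subset of ⟦n+1⟧) is well-formed. Then x̂⁺ ∩ x = ∅. -/
import Mathlib


/-- The three symbols `⊖`, `⊙`, `⊕`. -/
inductive CSym : Type
  | minus : CSym
  | mid : CSym
  | plus : CSym
deriving DecidableEq

/-- `Str n j` is `⟦n⟧_j`: strings of length `n` over `{⊖,⊙,⊕}` with exactly `j`
occurrences of `⊙`. -/
def Str (n j : ℕ) : Type := {l : List CSym // l.length = n ∧ l.count CSym.mid = j}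

/-- The even faces `a⁺` of `a ∈ ⟦n⟧_{j+1}`: replace the `i`-th occurrence of `⊙`
by `⊕` if `i` is odd (i.e. the number of earlier `⊙`'s is even), and by `⊖` if
`i` is even. -/
def posF {n j : ℕ} (a : Str n (j+1)) : Set (Str n j) :=
  {b | ∃ (q : ℕ) (h : q < a.1.length), a.1.get ⟨q, h⟩ = CSym.mid ∧
    b.1 = a.1.set q (if Even ((a.1.take q).count CSym.mid) then CSym.plus else CSym.minus)}

/-- The odd faces `a⁻` of `a ∈ ⟦n⟧_{j+1}`: replace the `i`-th occurrence of `⊙`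
by `⊖` if `i` is odd, and by `⊕` if `i` is even. -/
def negF {n j : ℕ} (a : Str n (j+1)) : Set (Str n j) :=
  {b | ∃ (q : ℕ) (h : q < a.1.length), a.1.get ⟨q, h⟩ = CSym.mid ∧
    b.1 = a.1.set q (if Even ((a.1.take q).count CSym.mid) then CSym.minus else CSym.plus)}

def sPos {n j : ℕ} (ξ : Set (Str n (j+1))) : Set (Str n j) := ⋃ a ∈ ξ, posF a
def sNeg {n j : ℕ} (ξ : Set (Str n (j+1))) : Set (Str n j) := ⋃ a ∈ ξ, negF a

/-- Append `⊖` to a string. -/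
def appM {n j : ℕ} (a : Str n j) : Str (n+1) j :=
  ⟨a.1 ++ [CSym.minus], by
    refine ⟨by simp [a.2.1], ?_⟩
    simp [List.count_append, a.2.2, List.count_singleton]⟩

/-- Append `⊕` to a string. -/
def appP {n j : ℕ} (a : Str n j) : Str (n+1) j :=
  ⟨a.1 ++ [CSym.plus], by
    refine ⟨by simp [a.2.1], ?_⟩
    simp [List.count_append, a.2.2, List.count_singleton]⟩

/-- Append `⊙` to a string. -/
def appO {n j : ℕ} (a : Str n j) : Str (n+1) (j+1) :=
  ⟨a.1 ++ [CSym.mid], by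
    refine ⟨by simp [a.2.1], ?_⟩
    simp [List.count_append, a.2.2, List.count_singleton]⟩

/-- A subset of `⟦n⟧_{j+1}` is well-formed if distinct elements share no even
face and no odd face. -/
def WfC {n j : ℕ} (ξ : Set (Str n (j+1))) : Prop :=
  ∀ a ∈ ξ, ∀ b ∈ ξ, a ≠ b → posF a ∩ posF b = ∅ ∧ negF a ∩ negF b = ∅

/-- `ξ` moves `μ` to `π`. -/
def MovesC {n j : ℕ} (ξ : Set (Str n (j+1))) (μ π : Set (Str n j)) : Prop :=
  π = (μ ∪ sPos ξ) \ sNeg ξ ∧ μ = (π ∪ sNeg ξ) \ sPos ξ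

lemma appP_mem_posF_appP {n j : ℕ} {a : Str n (j+2)} {b : Str n (j+1)}
    (hb : b ∈ posF a) : appP b ∈ posF (appP a) := by
  obtain ⟨q, hq, hmid, hset⟩ := hb
  refine ⟨q, ?_, ?_, ?_⟩
  · simp only [appP, List.length_append, List.length_singleton]; omega
  · rw [List.get_eq_getElem] at hmid ⊢
    simpa [appP, List.getElem_append_left hq] using hmid
  · have htake : (a.1 ++ [CSym.plus]).take q = a.1.take q :=
      List.take_append_of_le_length (by omega)
    have hsetapp : ∀ s, (a.1 ++ [CSym.plus]).set q s = a.1.set q s ++ [CSym.plus] := by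
      intro s; rw [List.set_append_left _ _ hq]
    simp only [appP, htake, hsetapp, hset]

lemma appP_mem_posF_appO {n j : ℕ} (hj : Odd j) (b : Str n (j+1)) :
    appP b ∈ posF (appO b) := by
  have hlen : b.1.length = n := b.2.1
  refine ⟨n, ?_, ?_, ?_⟩
  · simp [appO, hlen]
  · rw [List.get_eq_getElem]
    have : (b.1 ++ [CSym.mid])[n]'(by simp [hlen]) = CSym.mid := by
      rw [List.getElem_append_right (by omega)]
      simp [hlen]
    simpa [appO] using this
  · have htake : (b.1 ++ [CSym.mid]).take n = b.1 :=
      by rw [List.take_append_of_le_length (by omega), List.take_of_length_le (by omega)]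
    have heven : Even (b.1.count CSym.mid) := by
      rw [b.2.2]; rcases hj with ⟨k, hk⟩; exact ⟨k+1, by omega⟩
    have hsetapp : (b.1 ++ [CSym.mid]).set n CSym.plus = b.1 ++ [CSym.plus] := by
      obtain ⟨l, hl⟩ : ∃ l : List CSym, l = b.1 := ⟨b.1, rfl⟩
      rw [← hl] at hlen ⊢
      subst hlen
      rw [List.set_append_right _ _ (by omega)]
      simp
    simp only [appO, appP, htake, heven, if_pos, hsetapp]

lemma appO_ne_appP {n j : ℕ} (b : Str n (j+1)) (a : Str n (j+2)) :
    appO b ≠ appP a := by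
  intro hEq
  have hl : b.1 ++ [CSym.mid] = a.1 ++ [CSym.plus] := congrArg Subtype.val hEq
  have := congrArg List.getLast? hl
  simp at this

/-- If `x⊙ ∪ x̂⊕` is well-formed, then `x̂⁺ ∩ x = ∅` (for `j` odd, so that
the appended `⊙` receives a `⊕` replacement). -/
theorem cube_wf_pos_disjoint (n j : ℕ) (hj : Odd j)
    (x : Set (Str n (j+1))) (xh : Set (Str n (j+2)))
    (h : WfC (appO '' x ∪ appP '' xh)) :
    sPos xh ∩ x = ∅ := by
  rw [Set.eq_empty_iff_forall_notMem]
  rintro b ⟨hbp, hbx⟩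
  obtain ⟨a, ha, hba⟩ : ∃ a ∈ xh, b ∈ posF a := by
    simpa [sPos] using hbp
  have h1 : appO b ∈ appO '' x ∪ appP '' xh := Or.inl ⟨b, hbx, rfl⟩
  have h2 : appP a ∈ appO '' x ∪ appP '' xh := Or.inr ⟨a, ha, rfl⟩
  have hd := (h _ h1 _ h2 (appO_ne_appP b a)).1
  have : appP b ∈ posF (appO b) ∩ posF (appP a) :=
    ⟨appP_mem_posF_appO hj b, appP_mem_posF_appP hba⟩
  rw [hd] at this
  exact this
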